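/- Let d, d' be positive integers and let the hypothesis h = g ∘ f with f : ℝ^d → ℝ^{d'} an invertible representation function and g : ℝ^{d'} → 𝒴 a labeling function. Let the unseen domain be (μ^{(u)}, f^{(u)}, g^{(u)}) and let there be S seen domains (μ^{(s)}, f^{(s)}, g^{(s)}) for s = 1, …, S, with true hypotheses h^{(v)} = g^{(v)} ∘ f^{(v)}. Assume the loss function ℓ is nonnegative, symmetric, bounded by a finite positive number L, and satisfies the triangle inequality. Then for all convex weights λ^{(1)}, …, λ^{(S)} (nonnegative and summing to one): R^{(u)}(h) ≤ Σ_{s=1}^{S} λ^{(s)} R^{(s)}(h) + L Σ_{s=1}^{S} λ^{(s)} ‖f_# μ^{(u)} − f_# μ^{(s)}‖₁ + Σ_{s=1}^{S} λ^{(s)} σ^{(u,s)}, where σ^{(u,s)} := min{ E_{x∼μ^{(u)}}[ℓ(h^{(u)}(x), h^{(s)}(x))], E_{x∼μ^{(s)}}[ℓ(h^{(u)}(x), h^{(s)}(x))] }. -/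

import Mathlib

/-!
Fix a seen domain `s`. The triangle inequality for `ℓ` through `h⁽ˢ⁾` can be applied under
`μ⁽ᵘ⁾` or under `μ⁽ˢ⁾`; either way one risk has to be moved from one distribution to the other.
For `|ψ| ≤ L` and densities `p₁, p₂` with respect to a common measure,
`∫ ψ p₁ - ∫ ψ p₂ = ∫ ψ (p₁ - p₂) ≤ L ‖p₁ - p₂‖₁`, so the move costs at most `L` times the
L¹ distance, and pushing both distributions forward by the injective `f` does not change that
distance. Averaging the per-domain bounds with the weights `λ⁽ˢ⁾` gives the claim.
-/

open MeasureTheory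

/-- The L¹ (total variation) distance between two measures:
`‖μ − ν‖₁ = ∫ |dμ/dλ − dν/dλ| dλ` where `λ = μ + ν` is a common dominating measure. -/
noncomputable def l1Dist {α : Type*} [MeasurableSpace α] (μ ν : Measure α) : ℝ :=
  ∫ x, |(μ.rnDeriv (μ + ν) x).toReal - (ν.rnDeriv (μ + ν) x).toReal| ∂(μ + ν)

theorem le_sum_mul_of_forall_le {ι R : Type*} [Semiring R] [PartialOrder R] [IsOrderedRing R]
    (s : Finset ι) {w F : ι → R} {x : R} (hw : ∀ i ∈ s, 0 ≤ w i) (hw₁ : ∑ i ∈ s, w i = 1)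
    (hF : ∀ i ∈ s, x ≤ F i) :
    x ≤ ∑ i ∈ s, w i * F i :=
  calc x = ∑ i ∈ s, w i * x := by rw [← Finset.sum_mul, hw₁, one_mul]
    _ ≤ ∑ i ∈ s, w i * F i :=
      Finset.sum_le_sum fun i hi => mul_le_mul_of_nonneg_left (hF i hi) (hw i hi)

section L1Dist

variable {α β : Type*} [MeasurableSpace α] [MeasurableSpace β]

theorem MeasurableEmbedding.l1Dist_map {f : α → β} (hf : MeasurableEmbedding f)
    (μ ν : Measure α) [SigmaFinite μ] [SigmaFinite ν] :
    l1Dist (μ.map f) (ν.map f) = l1Dist μ ν := by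
  rw [l1Dist, ← Measure.map_add _ _ hf.measurable, hf.integral_map, l1Dist]
  refine integral_congr_ae ?_
  filter_upwards [hf.rnDeriv_map μ (μ + ν), hf.rnDeriv_map ν (μ + ν)] with x hμ hν
  rw [hμ, hν]

theorem integral_le_integral_add_mul_l1Dist {ν₁ ν₂ : Measure α}
    [IsFiniteMeasure ν₁] [IsFiniteMeasure ν₂] {φ : α → ℝ} {L : ℝ}
    (hφ : AEStronglyMeasurable φ (ν₁ + ν₂)) (hφL : ∀ x, |φ x| ≤ L) :
    ∫ x, φ x ∂ν₁ ≤ ∫ x, φ x ∂ν₂ + L * l1Dist ν₁ ν₂ := by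
  set π := ν₁ + ν₂
  set r₁ := fun x => (ν₁.rnDeriv π x).toReal
  set r₂ := fun x => (ν₂.rnDeriv π x).toReal
  have hr₁ : Integrable r₁ π := Measure.integrable_toReal_rnDeriv
  have hr₂ : Integrable r₂ π := Measure.integrable_toReal_rnDeriv
  have hφL' : ∀ᵐ x ∂π, ‖φ x‖ ≤ L := ae_of_all _ hφL
  have e₁ : ∫ x, r₁ x * φ x ∂π = ∫ x, φ x ∂ν₁ :=
    integral_rnDeriv_smul (Measure.AbsolutelyContinuous.rfl.add_right ν₂)
  have e₂ : ∫ x, r₂ x * φ x ∂π = ∫ x, φ x ∂ν₂ :=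
    integral_rnDeriv_smul (Measure.AbsolutelyContinuous.rfl.add_right' ν₁)
  have hdiff : ∫ x, φ x ∂ν₁ - ∫ x, φ x ∂ν₂ = ∫ x, (r₁ x - r₂ x) * φ x ∂π := by
    simp only [← e₁, ← e₂, sub_mul]
    exact (integral_sub (hr₁.mul_bdd hφ hφL') (hr₂.mul_bdd hφ hφL')).symm
  have hpoint : ∀ x, (r₁ x - r₂ x) * φ x ≤ |r₁ x - r₂ x| * L := fun x =>
    calc (r₁ x - r₂ x) * φ x ≤ |r₁ x - r₂ x| * |φ x| := (le_abs_self _).trans_eq (abs_mul _ _)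
      _ ≤ |r₁ x - r₂ x| * L := by gcongr; exact hφL x
  have hmono : ∫ x, (r₁ x - r₂ x) * φ x ∂π ≤ ∫ x, |r₁ x - r₂ x| * L ∂π :=
    integral_mono ((hr₁.sub hr₂).mul_bdd hφ hφL') ((hr₁.sub hr₂).abs.mul_const L) hpoint
  rw [integral_mul_const, mul_comm] at hmono
  rw [l1Dist]
  linarith

end L1Dist

section Risk

variable {α Y : Type*} [MeasurableSpace α] [MeasurableSpace Y]

/-- `R⁽ᵛ⁾(h) = risk ℓ μ⁽ᵛ⁾ h h⁽ᵛ⁾`, and the two terms of `σ^{(u,s)}` are `risk ℓ μ⁽ᵘ⁾ h⁽ᵘ⁾ h⁽ˢ⁾`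
and `risk ℓ μ⁽ˢ⁾ h⁽ᵘ⁾ h⁽ˢ⁾`. -/
noncomputable def risk (ℓ : Y → Y → ℝ) (μ : Measure α) (h h' : α → Y) : ℝ :=
  ∫ x, ℓ (h x) (h' x) ∂μ

theorem integrable_loss_comp {ℓ : Y → Y → ℝ} {L : ℝ} (hℓ : Measurable (Function.uncurry ℓ))
    (hℓL : ∀ a b, |ℓ a b| ≤ L) {h h' : α → Y} (hh : Measurable h) (hh' : Measurable h')
    (μ : Measure α) [IsFiniteMeasure μ] :
    Integrable (fun x => ℓ (h x) (h' x)) μ :=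
  (integrable_const L).mono' (hℓ.comp (hh.prodMk hh')).aestronglyMeasurable
    (ae_of_all _ fun _ => (Real.norm_eq_abs _).trans_le (hℓL _ _))

theorem risk_le_risk_add_risk {ℓ : Y → Y → ℝ} {L : ℝ} (hℓ : Measurable (Function.uncurry ℓ))
    (hℓL : ∀ a b, |ℓ a b| ≤ L) (hℓsymm : ∀ a b, ℓ a b = ℓ b a)
    (hℓtri : ∀ a b c, ℓ a c ≤ ℓ a b + ℓ b c) {h₁ h₂ h₃ : α → Y}
    (hh₁ : Measurable h₁) (hh₂ : Measurable h₂) (hh₃ : Measurable h₃)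
    (μ : Measure α) [IsFiniteMeasure μ] :
    risk ℓ μ h₁ h₃ ≤ risk ℓ μ h₁ h₂ + risk ℓ μ h₃ h₂ := by
  rw [risk, risk, risk, ← integral_add (integrable_loss_comp hℓ hℓL hh₁ hh₂ μ)
    (integrable_loss_comp hℓ hℓL hh₃ hh₂ μ)]
  refine integral_mono (integrable_loss_comp hℓ hℓL hh₁ hh₃ μ)
    ((integrable_loss_comp hℓ hℓL hh₁ hh₂ μ).add (integrable_loss_comp hℓ hℓL hh₃ hh₂ μ))
    fun x => ?_
  simpa only [hℓsymm (h₂ x)] using hℓtri (h₁ x) (h₂ x) (h₃ x)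

theorem risk_le_risk_add_mul_l1Dist {ℓ : Y → Y → ℝ} {L : ℝ}
    (hℓ : Measurable (Function.uncurry ℓ)) (hℓL : ∀ a b, |ℓ a b| ≤ L) {h h' : α → Y}
    (hh : Measurable h) (hh' : Measurable h') (μ ν : Measure α)
    [IsFiniteMeasure μ] [IsFiniteMeasure ν] :
    risk ℓ μ h h' ≤ risk ℓ ν h h' + L * l1Dist μ ν :=
  integral_le_integral_add_mul_l1Dist (hℓ.comp (hh.prodMk hh')).aestronglyMeasurable
    fun _ => hℓL _ _

theorem risk_le_risk_add_mul_l1Dist_add_min {ℓ : Y → Y → ℝ} {L : ℝ}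
    (hℓ : Measurable (Function.uncurry ℓ)) (hℓL : ∀ a b, |ℓ a b| ≤ L)
    (hℓsymm : ∀ a b, ℓ a b = ℓ b a) (hℓtri : ∀ a b c, ℓ a c ≤ ℓ a b + ℓ b c)
    {h hu hs : α → Y} (hh : Measurable h) (hhu : Measurable hu) (hhs : Measurable hs)
    (μu μs : Measure α) [IsFiniteMeasure μu] [IsFiniteMeasure μs] :
    risk ℓ μu h hu ≤ risk ℓ μs h hs + L * l1Dist μu μs
      + min (risk ℓ μu hu hs) (risk ℓ μs hu hs) := by
  rw [← min_add_add_left]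
  refine le_min ?_ ?_
  · calc risk ℓ μu h hu ≤ risk ℓ μu h hs + risk ℓ μu hu hs :=
          risk_le_risk_add_risk hℓ hℓL hℓsymm hℓtri hh hhs hhu μu
      _ ≤ risk ℓ μs h hs + L * l1Dist μu μs + risk ℓ μu hu hs := by
          gcongr; exact risk_le_risk_add_mul_l1Dist hℓ hℓL hh hhs μu μs
  · calc risk ℓ μu h hu ≤ risk ℓ μs h hu + L * l1Dist μu μs :=
          risk_le_risk_add_mul_l1Dist hℓ hℓL hh hhu μu μs
      _ ≤ risk ℓ μs h hs + risk ℓ μs hu hs + L * l1Dist μu μs := by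
          gcongr; exact risk_le_risk_add_risk hℓ hℓL hℓsymm hℓtri hh hhs hhu μs
      _ = _ := by ring

end Risk

theorem lemma2_convex_combination_risk_bound_general
    (d d' : ℕ) {Y : Type*} [MeasurableSpace Y]
    (S : ℕ)
    (μu : Measure (EuclideanSpace ℝ (Fin d))) [IsProbabilityMeasure μu]
    (μs : Fin S → Measure (EuclideanSpace ℝ (Fin d)))
    (hμs : ∀ s, IsProbabilityMeasure (μs s))
    (f fu : EuclideanSpace ℝ (Fin d) → EuclideanSpace ℝ (Fin d'))
    (fs : Fin S → EuclideanSpace ℝ (Fin d) → EuclideanSpace ℝ (Fin d'))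
    (g gu : EuclideanSpace ℝ (Fin d') → Y)
    (gs : Fin S → EuclideanSpace ℝ (Fin d') → Y)
    (hf : Measurable f) (hfu : Measurable fu) (hfs : ∀ s, Measurable (fs s))
    (hg : Measurable g) (hgu : Measurable gu) (hgs : ∀ s, Measurable (gs s))
    (hfinv : Function.Bijective f)
    (ℓ : Y → Y → ℝ) (L : ℝ)
    (hℓmeas : Measurable (Function.uncurry ℓ))
    (hℓnonneg : ∀ a b, 0 ≤ ℓ a b)
    (hℓsymm : ∀ a b, ℓ a b = ℓ b a)
    (hℓbdd : ∀ a b, ℓ a b ≤ L)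
    (hℓtri : ∀ a b c, ℓ a c ≤ ℓ a b + ℓ b c)
    (lam : Fin S → ℝ) (hlam_nonneg : ∀ s, 0 ≤ lam s)
    (hlam_sum : ∑ s, lam s = 1) :
    ∫ x, ℓ (g (f x)) (gu (fu x)) ∂μu ≤
      (∑ s, lam s * ∫ x, ℓ (g (f x)) (gs s (fs s x)) ∂(μs s))
      + L * ∑ s, lam s * l1Dist (μu.map f) ((μs s).map f)
      + ∑ s, lam s * min (∫ x, ℓ (gu (fu x)) (gs s (fs s x)) ∂μu)
                         (∫ x, ℓ (gu (fu x)) (gs s (fs s x)) ∂(μs s)) := by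
  have hf_emb : MeasurableEmbedding f := hf.measurableEmbedding hfinv.injective
  have hℓL : ∀ a b, |ℓ a b| ≤ L := fun a b => (abs_of_nonneg (hℓnonneg a b)).trans_le (hℓbdd a b)
  have hdomain : ∀ s, risk ℓ μu (g ∘ f) (gu ∘ fu) ≤ risk ℓ (μs s) (g ∘ f) (gs s ∘ fs s)
      + L * l1Dist (μu.map f) ((μs s).map f)
      + min (risk ℓ μu (gu ∘ fu) (gs s ∘ fs s)) (risk ℓ (μs s) (gu ∘ fu) (gs s ∘ fs s)) := by
    intro s
    have := hμs s
    rw [hf_emb.l1Dist_map]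
    exact risk_le_risk_add_mul_l1Dist_add_min hℓmeas hℓL hℓsymm hℓtri (hg.comp hf)
      (hgu.comp hfu) ((hgs s).comp (hfs s)) μu (μs s)
  refine (le_sum_mul_of_forall_le Finset.univ (fun s _ => hlam_nonneg s) hlam_sum
    fun s _ => hdomain s).trans_eq ?_
  simp only [mul_add, Finset.sum_add_distrib, Finset.mul_sum, mul_left_comm (lam _) L]
  rfl

/-- **Lemma 2**: for an invertible representation `f`, a loss `ℓ` satisfying assumption A1,
and any convex weights `λ⁽¹⁾, …, λ⁽ᔆ⁾` over the `S` seen domains, the unseen-domain risk of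
`h = g ∘ f` is bounded by the convex combination of the seen-domain risks, `L` times the
convex combination of L¹ distances between pushforward distributions, and the convex
combination of the combined risks `σ^{(u,s)}`. -/
theorem lemma2_convex_combination_risk_bound
    (d d' : ℕ) (hd : 0 < d) (hd' : 0 < d') {Y : Type*} [MeasurableSpace Y]
    (S : ℕ)
    (μu : Measure (EuclideanSpace ℝ (Fin d))) [IsProbabilityMeasure μu]
    (μs : Fin S → Measure (EuclideanSpace ℝ (Fin d)))
    (hμs : ∀ s, IsProbabilityMeasure (μs s))
    (f fu : EuclideanSpace ℝ (Fin d) → EuclideanSpace ℝ (Fin d'))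
    (fs : Fin S → EuclideanSpace ℝ (Fin d) → EuclideanSpace ℝ (Fin d'))
    (g gu : EuclideanSpace ℝ (Fin d') → Y)
    (gs : Fin S → EuclideanSpace ℝ (Fin d') → Y)
    (hf : Measurable f) (hfu : Measurable fu) (hfs : ∀ s, Measurable (fs s))
    (hg : Measurable g) (hgu : Measurable gu) (hgs : ∀ s, Measurable (gs s))
    (hfinv : Function.Bijective f)
    (ℓ : Y → Y → ℝ) (L : ℝ) (hL : 0 < L)
    (hℓmeas : Measurable (Function.uncurry ℓ))
    (hℓnonneg : ∀ a b, 0 ≤ ℓ a b)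
    (hℓsymm : ∀ a b, ℓ a b = ℓ b a)
    (hℓbdd : ∀ a b, ℓ a b ≤ L)
    (hℓtri : ∀ a b c, ℓ a c ≤ ℓ a b + ℓ b c)
    (lam : Fin S → ℝ) (hlam_nonneg : ∀ s, 0 ≤ lam s)
    (hlam_sum : ∑ s, lam s = 1) :
    ∫ x, ℓ (g (f x)) (gu (fu x)) ∂μu ≤
      (∑ s, lam s * ∫ x, ℓ (g (f x)) (gs s (fs s x)) ∂(μs s))
      + L * ∑ s, lam s * l1Dist (μu.map f) ((μs s).map f)
      + ∑ s, lam s * min (∫ x, ℓ (gu (fu x)) (gs s (fs s x)) ∂μu)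
                         (∫ x, ℓ (gu (fu x)) (gs s (fs s x)) ∂(μs s)) :=
  lemma2_convex_combination_risk_bound_general d d' S μu μs hμs f fu fs g gu gs hf hfu hfs hg hgu
    hgs hfinv ℓ L hℓmeas hℓnonneg hℓsymm hℓbdd hℓtri lam hlam_nonneg hlam_sum
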